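/- arXiv:1805.01074 — 2 statements merged into one kernel-verified Lean document; each statement's English description precedes it below -/
import Mathlib

section
/- Let f : {0,1}^n → {0,1} and 0 < ε < 1/2 satisfy dist(f, k-Junta) = ε, where dist(f,g) is the fraction of points on which f and g disagree and dist(f, k-Junta) is the minimum distance of f to any function depending on at most k variables. Define g : {0,1}^n × {0,1} → {0,1} by g(x, y) = f(x) XOR y. Then dist(g, (k+1)-Junta) = ε. -/
open Finset

noncomputable def hdist {n : ℕ} (f g : (Fin n → Bool) → Bool) : ℝ :=
  ((Finset.univ.filter (fun x => f x ≠ g x)).card : ℝ) / 2 ^ n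

def IsJunta {n : ℕ} (k : ℕ) (h : (Fin n → Bool) → Bool) : Prop :=
  ∃ S : Finset (Fin n), S.card ≤ k ∧
    ∀ x y : Fin n → Bool, (∀ i ∈ S, x i = y i) → h x = h y

noncomputable def juntaDist {n : ℕ} (k : ℕ) (f : (Fin n → Bool) → Bool) : ℝ :=
  sInf {d : ℝ | ∃ h : (Fin n → Bool) → Bool, IsJunta k h ∧ d = hdist f h}

lemma hdist_nonneg {n : ℕ} (f g : (Fin n → Bool) → Bool) : 0 ≤ hdist f g := by
  unfold hdist; positivity

lemma card_filter_snoc {n : ℕ} (P : (Fin (n+1) → Bool) → Prop) [DecidablePred P] :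
    (univ.filter P).card
      = (univ.filter fun x : Fin n → Bool => P (Fin.snoc x false)).card
        + (univ.filter fun x : Fin n → Bool => P (Fin.snoc x true)).card := by
  classical
  have hinj : ∀ b : Bool,
      Function.Injective (fun x : Fin n → Bool => (Fin.snoc x b : Fin (n+1) → Bool)) := by
    intro b x y hxy
    have := congrArg Fin.init hxy
    simpa [Fin.init_snoc] using this
  have hun : (univ.filter P) =
      ((univ.filter fun x : Fin n → Bool => P (Fin.snoc x false)).image
        (fun x => Fin.snoc x false))
      ∪ ((univ.filter fun x : Fin n → Bool => P (Fin.snoc x true)).image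
        (fun x => Fin.snoc x true)) := by
    ext z
    simp only [mem_filter, mem_union, mem_image, mem_univ, true_and]
    constructor
    · intro hz
      rcases hb : z (Fin.last n) with _ | _
      · left
        exact ⟨Fin.init z, by rw [← hb, Fin.snoc_init_self]; exact hz,
          by rw [← hb, Fin.snoc_init_self]⟩
      · right
        exact ⟨Fin.init z, by rw [← hb, Fin.snoc_init_self]; exact hz,
          by rw [← hb, Fin.snoc_init_self]⟩
    · rintro (⟨x, hx, rfl⟩ | ⟨x, hx, rfl⟩) <;> exact hx
  rw [hun, Finset.card_union_of_disjoint, Finset.card_image_of_injective _ (hinj false),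
    Finset.card_image_of_injective _ (hinj true)]
  rw [Finset.disjoint_left]
  rintro z hz hz'
  simp only [mem_image, mem_filter, mem_univ, true_and] at hz hz'
  obtain ⟨x, _, rfl⟩ := hz
  obtain ⟨y, _, hy⟩ := hz'
  have := congrArg (fun w : Fin (n+1) → Bool => w (Fin.last n)) hy
  simp [Fin.snoc_last] at this

lemma univ_card_fun {n : ℕ} : (univ : Finset (Fin n → Bool)).card = 2 ^ n := by
  rw [Finset.card_univ]; simp

theorem stmt0 {n k : ℕ} (f : (Fin n → Bool) → Bool) (ε : ℝ)
    (hε0 : 0 < ε) (hε1 : ε < 1/2) (hf : juntaDist k f = ε)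
    (g : (Fin (n+1) → Bool) → Bool)
    (hg : ∀ z : Fin (n+1) → Bool, g z = xor (f (fun i => z i.castSucc)) (z (Fin.last n))) :
    juntaDist (k+1) g = ε := by
  classical
  set Sf := {d : ℝ | ∃ h, IsJunta k h ∧ d = hdist f h} with hSfdef
  have hbddf : BddBelow Sf := ⟨0, by rintro d ⟨h, _, rfl⟩; exact hdist_nonneg f h⟩
  have hfinf : Sf.Finite := by
    have hsub : Sf ⊆ (fun h => hdist f h) '' Set.univ := by
      rintro d ⟨h, _, rfl⟩; exact ⟨h, trivial, rfl⟩
    exact Set.Finite.subset (Set.Finite.image _ Set.finite_univ) hsub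
  have hnef : Sf.Nonempty :=
    ⟨hdist f (fun _ => false), fun _ => false, ⟨∅, by simp, fun _ _ _ => rfl⟩, rfl⟩
  have hεmem : ε ∈ Sf := by rw [← hf]; exact hnef.csInf_mem hfinf
  obtain ⟨h, hjh, hdh⟩ := hεmem
  have hlbf : ∀ h', IsJunta k h' → ε ≤ hdist f h' := by
    intro h' hj'
    rw [← hf]; exact csInf_le hbddf ⟨h', hj', rfl⟩
  set Sg := {d : ℝ | ∃ hh, IsJunta (k+1) hh ∧ d = hdist g hh} with hSgdef
  have hbddg : BddBelow Sg := ⟨0, by rintro d ⟨hh, _, rfl⟩; exact hdist_nonneg g hh⟩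
  have hneg : Sg.Nonempty :=
    ⟨hdist g (fun _ => false), fun _ => false, ⟨∅, by simp, fun _ _ _ => rfl⟩, rfl⟩
  have hpow : ((2:ℝ) ^ (n+1)) = 2 * 2 ^ n := by ring
  have hpowpos : (0:ℝ) < 2 ^ n := by positivity
  -- upper bound
  set H : (Fin (n+1) → Bool) → Bool :=
    fun z => xor (h (Fin.init z)) (z (Fin.last n)) with hHdef
  have hHj : IsJunta (k+1) H := by
    obtain ⟨S, hScard, hS⟩ := hjh
    refine ⟨insert (Fin.last n) (S.image Fin.castSucc), ?_, ?_⟩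
    · calc (insert (Fin.last n) (S.image Fin.castSucc)).card
          ≤ (S.image Fin.castSucc).card + 1 := Finset.card_insert_le _ _
        _ ≤ S.card + 1 := by
            have := Finset.card_image_le (s := S) (f := Fin.castSucc); omega
        _ ≤ k + 1 := by omega
    · intro x y hxy
      have hlast : x (Fin.last n) = y (Fin.last n) := hxy _ (Finset.mem_insert_self _ _)
      have hinit : h (Fin.init x) = h (Fin.init y) := by
        apply hS
        intro i hi
        exact hxy _ (Finset.mem_insert_of_mem (Finset.mem_image_of_mem _ hi))
      simp only [hHdef, hlast, hinit]
  have hHd : hdist g H = hdist f h := by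
    unfold hdist
    have hc := card_filter_snoc (fun z => g z ≠ H z)
    have e0 : (univ.filter fun x : Fin n → Bool =>
        g (Fin.snoc x false) ≠ H (Fin.snoc x false)) = univ.filter fun x => f x ≠ h x := by
      apply Finset.filter_congr
      intro x _
      have hx : (fun i : Fin n => (Fin.snoc x false : Fin (n+1) → Bool) i.castSucc) = x := by
        funext i; rw [Fin.snoc_castSucc]
      simp [hg, hHdef, Fin.init_snoc, Fin.snoc_last, hx]
    have e1 : (univ.filter fun x : Fin n → Bool =>
        g (Fin.snoc x true) ≠ H (Fin.snoc x true)) = univ.filter fun x => f x ≠ h x := by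
      apply Finset.filter_congr
      intro x _
      have hx : (fun i : Fin n => (Fin.snoc x true : Fin (n+1) → Bool) i.castSucc) = x := by
        funext i; rw [Fin.snoc_castSucc]
      simp only [hg, hHdef, Fin.init_snoc, Fin.snoc_last, hx]
      cases hfx : f x <;> cases hhx : h x <;> simp
    rw [hc, e0, e1, hpow]
    push_cast
    field_simp
    ring
  have hub : sInf Sg ≤ ε := csInf_le hbddg ⟨H, hHj, by rw [hHd]; exact hdh⟩
  -- lower bound
  have hlb : ∀ d ∈ Sg, ε ≤ d := by
    rintro d ⟨H', ⟨S', hS'card, hS'⟩, rfl⟩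
    set h0 : (Fin n → Bool) → Bool := fun x => H' (Fin.snoc x false) with hh0
    set h1 : (Fin n → Bool) → Bool := fun x => H' (Fin.snoc x true) with hh1
    have hc := card_filter_snoc (fun z => g z ≠ H' z)
    have e0 : (univ.filter fun x : Fin n → Bool =>
        g (Fin.snoc x false) ≠ H' (Fin.snoc x false)) = univ.filter fun x => f x ≠ h0 x := by
      apply Finset.filter_congr
      intro x _
      have hx : (fun i : Fin n => (Fin.snoc x false : Fin (n+1) → Bool) i.castSucc) = x := by
        funext i; rw [Fin.snoc_castSucc]
      simp [hg, hh0, Fin.snoc_last, hx]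
    have e1 : (univ.filter fun x : Fin n → Bool =>
        g (Fin.snoc x true) ≠ H' (Fin.snoc x true)) = univ.filter fun x => f x = h1 x := by
      apply Finset.filter_congr
      intro x _
      have hx : (fun i : Fin n => (Fin.snoc x true : Fin (n+1) → Bool) i.castSucc) = x := by
        funext i; rw [Fin.snoc_castSucc]
      simp only [hg, hh1, Fin.snoc_last, hx]
      cases hfx : f x <;> cases hhx : H' (Fin.snoc x true) <;> simp
    have hgH : hdist g H' =
        (((univ.filter fun x : Fin n → Bool => f x ≠ h0 x).card : ℝ)
          + ((univ.filter fun x : Fin n → Bool => f x = h1 x).card : ℝ)) / 2 ^ (n+1) := by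
      unfold hdist
      rw [hc, e0, e1]
      push_cast
      ring
    by_cases hlast : Fin.last n ∈ S'
    · have hjunta : ∀ b : Bool, IsJunta k (fun x => H' (Fin.snoc x b)) := by
        intro b
        refine ⟨univ.filter (fun i : Fin n => i.castSucc ∈ S'), ?_, ?_⟩
        · have hmaps : ∀ a ∈ univ.filter (fun i : Fin n => i.castSucc ∈ S'),
              a.castSucc ∈ S'.erase (Fin.last n) := by
            intro a ha
            simp only [mem_filter, mem_univ, true_and] at ha
            exact Finset.mem_erase.2 ⟨(Fin.castSucc_lt_last a).ne, ha⟩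
          have hinj : Set.InjOn (Fin.castSucc : Fin n → Fin (n+1))
              (↑(univ.filter (fun i : Fin n => i.castSucc ∈ S')) : Set (Fin n)) :=
            fun a _ b _ hab => Fin.castSucc_injective _ hab
          have hle := Finset.card_le_card_of_injOn _ hmaps hinj
          rw [Finset.card_erase_of_mem hlast] at hle
          have hpos : 1 ≤ S'.card := Finset.card_pos.2 ⟨_, hlast⟩
          omega
        · intro x y hxy
          apply hS'
          intro j hj
          rcases Fin.eq_castSucc_or_eq_last j with ⟨i, rfl⟩ | rfl
          · rw [Fin.snoc_castSucc, Fin.snoc_castSucc]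
            exact hxy i (by simp [hj])
          · rw [Fin.snoc_last, Fin.snoc_last]
      have hd0 : ε ≤ hdist f h0 := hlbf _ (hjunta false)
      have hjn : IsJunta k (fun x => !(h1 x)) := by
        obtain ⟨S, hc1, hp⟩ := hjunta true
        exact ⟨S, hc1, fun x y hxy => congrArg Bool.not (hp x y hxy)⟩
      have hd1 : ε ≤ hdist f (fun x => !(h1 x)) := hlbf _ hjn
      have hde : hdist f (fun x => !(h1 x)) =
          ((univ.filter fun x : Fin n → Bool => f x = h1 x).card : ℝ) / 2 ^ n := by
        unfold hdist
        congr 1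
        norm_cast
        congr 1
        apply Finset.filter_congr
        intro x _
        cases hfx : f x <;> cases hhx : h1 x <;> simp_all
      have hc0 : ε * 2 ^ n ≤ ((univ.filter fun x : Fin n → Bool => f x ≠ h0 x).card : ℝ) := by
        have := hd0
        unfold hdist at this
        rw [le_div_iff₀ hpowpos] at this
        exact this
      have hc1' : ε * 2 ^ n ≤ ((univ.filter fun x : Fin n → Bool => f x = h1 x).card : ℝ) := by
        rw [hde, le_div_iff₀ hpowpos] at hd1
        exact hd1
      rw [hgH, le_div_iff₀ (by positivity), hpow]
      nlinarith [hpowpos]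
    · have h01 : h0 = h1 := by
        funext x
        apply hS'
        intro j hj
        rcases Fin.eq_castSucc_or_eq_last j with ⟨i, rfl⟩ | rfl
        · rw [Fin.snoc_castSucc, Fin.snoc_castSucc]
        · exact absurd hj hlast
      have hcompl : (univ.filter fun x : Fin n → Bool => f x ≠ h0 x).card
          + (univ.filter fun x : Fin n → Bool => f x = h1 x).card = 2 ^ n := by
        have heq : (univ.filter fun x : Fin n → Bool => f x = h1 x)
            = (univ.filter fun x : Fin n → Bool => ¬(f x ≠ h0 x)) := by
          apply Finset.filter_congr
          intro x _
          rw [← h01]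
          simp
        rw [heq, Finset.card_filter_add_card_filter_not, univ_card_fun]
      have : hdist g H' = 1 / 2 := by
        rw [hgH]
        have : (((univ.filter fun x : Fin n → Bool => f x ≠ h0 x).card : ℝ)
            + ((univ.filter fun x : Fin n → Bool => f x = h1 x).card : ℝ)) = 2 ^ n := by
          norm_cast
        rw [this, hpow]
        field_simp
      rw [this]
      linarith
  have hge : ε ≤ sInf Sg := le_csInf hneg hlb
  have : juntaDist (k+1) g = sInf Sg := rfl
  rw [this]
  linarith
end

section
/- Let a_1, …, a_t be nonnegative real numbers and let ℓ ≤ t. Then the elementary symmetric polynomial of degree ℓ satisfies: sum over all ℓ-element subsets S of [t] of the product of a_i for i in S is at most binomial(t, ℓ) · (sum_{i=1}^t a_i / t)^ℓ. -/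
/-!
Induct on the number of variables. Adjoining a variable `y` to `n` variables with mean `x` gives
`e_{m+1}(s, y) = e_{m+1}(s) + y e_m(s)`, which the induction hypothesis bounds by
`C(n, m+1) x^{m+1} + C(n, m) x^m y`. By Pascal's rule and `(m+1) C(n+1, m+1) = (n+1) C(n, m)`,
this is exactly `C(n+1, m+1)` times the tangent line of `u ↦ u^{m+1}` at `x`, evaluated at the new
mean `z = (n x + y)/(n + 1)`; convexity bounds it by `C(n+1, m+1) z^{m+1}`.
-/

open Finset

theorem Multiset.esymm_cons_succ {R : Type*} [CommSemiring R] (a : R) (s : Multiset R) (n : ℕ) :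
    (a ::ₘ s).esymm (n + 1) = s.esymm (n + 1) + a * s.esymm n := by
  simp [esymm, powersetCard_cons, map_map, sum_map_mul_left]

section LinearOrderedField

variable {R : Type*} [Field R] [LinearOrder R] [IsStrictOrderedRing R]

theorem choose_mul_pow_add_choose_mul_pow_mul_le (n m : ℕ) {x y : R} (hx : 0 ≤ x) (hy : 0 ≤ y) :
    n.choose (m + 1) * x ^ (m + 1) + n.choose m * x ^ m * y
      ≤ (n + 1).choose (m + 1) * ((n * x + y) / (n + 1)) ^ (m + 1) := by
  set z := (n * x + y) / (n + 1) with hz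
  have hn : (n : R) + 1 ≠ 0 := by positivity
  have hzx : z - x = (y - x) / (n + 1) := by
    rw [hz]; field_simp; ring
  have tangent : x ^ (m + 1) + (m + 1 : ℕ) * x ^ m * (z - x) ≤ z ^ (m + 1) := by
    have := pow_add_mul_le_add_pow (b := z - x) hx (by linarith [show 0 ≤ z by positivity]) (m + 1)
    rwa [add_sub_cancel, Nat.add_sub_cancel] at this
  have absorb : ((n + 1).choose (m + 1) : R) * (m + 1) = (n + 1) * n.choose m := by
    exact_mod_cast (Nat.add_one_mul_choose_eq n m).symm
  have pascal : ((n + 1).choose (m + 1) : R) = n.choose m + n.choose (m + 1) := by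
    exact_mod_cast Nat.choose_succ_succ n m
  calc _ = ((n + 1).choose (m + 1) : R) * (x ^ (m + 1) + (m + 1 : ℕ) * x ^ m * (z - x)) := by
        rw [hzx]; push_cast; field_simp
        linear_combination (x ^ (m + 1) - x ^ m * y) * absorb - ((n + 1) * x ^ (m + 1)) * pascal
    _ ≤ _ := by gcongr

theorem Multiset.esymm_le_choose_mul_pow_sum_div_card (s : Multiset R) (hs : ∀ a ∈ s, 0 ≤ a)
    (ℓ : ℕ) : s.esymm ℓ ≤ s.card.choose ℓ * (s.sum / s.card) ^ ℓ := by
  induction s using Multiset.induction_on generalizing ℓ with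
  | empty => cases ℓ <;> simp [esymm, powersetCard_zero_right]
  | cons a s ih =>
    have ha : 0 ≤ a := hs a (mem_cons_self a s)
    have hs' : ∀ b ∈ s, 0 ≤ b := fun b hb => hs b (mem_cons_of_mem hb)
    set x := s.sum / s.card
    have hx : 0 ≤ x := div_nonneg (sum_nonneg hs') (Nat.cast_nonneg _)
    have hsum : s.card * x = s.sum := by
      rcases Nat.eq_zero_or_pos s.card with h | h
      · simp [card_eq_zero.mp h]
      · exact mul_div_cancel₀ _ (by positivity)
    cases ℓ with
    | zero => simp [esymm]
    | succ m =>
      calc (a ::ₘ s).esymm (m + 1) = s.esymm (m + 1) + a * s.esymm m := esymm_cons_succ a s m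
        _ ≤ s.card.choose (m + 1) * x ^ (m + 1) + a * (s.card.choose m * x ^ m) := by
          gcongr
          exacts [ih hs' _, ih hs' _]
        _ ≤ (s.card + 1).choose (m + 1) * ((s.card * x + a) / (s.card + 1)) ^ (m + 1) := by
          linarith [choose_mul_pow_add_choose_mul_pow_mul_le s.card m hx ha]
        _ = _ := by rw [hsum, card_cons, sum_cons, add_comm a]; push_cast; rfl

end LinearOrderedField

theorem stmt12_general (t : ℕ) (a : Fin t → ℝ) (ha : ∀ i, 0 ≤ a i) (ℓ : ℕ) :
    ∑ S ∈ Finset.univ.powersetCard ℓ, ∏ i ∈ S, a i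
      ≤ (Nat.choose t ℓ : ℝ) * ((∑ i, a i) / t) ^ ℓ := by
  have h := (univ.val.map a).esymm_le_choose_mul_pow_sum_div_card (by simpa using ha) ℓ
  rwa [Finset.esymm_map_val, Multiset.card_map, card_val, card_univ, Fintype.card_fin] at h

theorem stmt12 (t : ℕ) (a : Fin t → ℝ) (ha : ∀ i, 0 ≤ a i) (ℓ : ℕ) (hℓ : ℓ ≤ t) :
    ∑ S ∈ Finset.univ.powersetCard ℓ, ∏ i ∈ S, a i
      ≤ (Nat.choose t ℓ : ℝ) * ((∑ i, a i) / t) ^ ℓ :=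
  stmt12_general t a ha ℓ
end
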